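/- arXiv:1605.01719 — 2 statements merged into one kernel-verified Lean document; each statement's English description precedes it below -/
import Mathlib

section
/- Let F : [0,∞) → [0,∞) be continuously differentiable with (1 + F(t)²)^{-1} F'(t) ≤ C F(t) for all t, ∫₀^∞ F(t) dt < ∞, and suppose there is a sequence t_j → ∞ with F(t_j) → 0. Then F(t) → 0 as t → ∞. -/
/-!
Since `d/dt arctan (F t) = F' t / (1 + F t ^ 2) ≤ C F t`, integrating from `s` to `t ≥ s` gives
`arctan (F t) ≤ arctan (F s) + C ∫_s^∞ F`. Taking `s = t_j` with `j` large, both terms on the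
right are small, uniformly in `t ≥ t_j`; so `arctan ∘ F → 0`, hence `F → 0`.
-/

open Set Filter MeasureTheory Real Topology

theorem arctan_sub_arctan_le_integral {F φ : ℝ → ℝ} {a b : ℝ} (hab : a ≤ b)
    (hcont : ContinuousOn F (Icc a b)) (hdiff : ∀ x ∈ Ioo a b, DifferentiableAt ℝ F x)
    (hφ : IntegrableOn φ (Icc a b))
    (hle : ∀ x ∈ Ioo a b, (1 + F x ^ 2)⁻¹ * deriv F x ≤ φ x) :
    arctan (F b) - arctan (F a) ≤ ∫ x in a..b, φ x :=
  intervalIntegral.sub_le_integral_of_hasDeriv_right_of_le (g := fun x => arctan (F x)) hab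
    (continuous_arctan.comp_continuousOn hcont)
    (fun x hx => by simpa only [one_div] using (hdiff x hx).hasDerivAt.arctan.hasDerivWithinAt)
    hφ hle

theorem intervalIntegral_le_setIntegral_Ioi {f : ℝ → ℝ} {s t : ℝ} (hst : s ≤ t)
    (hf : IntegrableOn f (Ioi s)) (hnonneg : ∀ x ∈ Ioi s, 0 ≤ f x) :
    ∫ x in s..t, f x ≤ ∫ x in Ioi s, f x := by
  rw [intervalIntegral.integral_of_le hst]
  exact setIntegral_mono_set hf ((ae_restrict_mem measurableSet_Ioi).mono hnonneg)
    Ioc_subset_Ioi_self.eventuallyLE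

theorem tendsto_of_tendsto_arctan {α : Type*} {l : Filter α} {f : α → ℝ} {a : ℝ}
    (h : Tendsto (fun x => arctan (f x)) l (𝓝 (arctan a))) : Tendsto f l (𝓝 a) := by
  have htan : ContinuousAt tan (arctan a) := continuousAt_tan.mpr (cos_arctan_pos a).ne'
  simpa only [tan_arctan, Function.comp_def] using htan.tendsto.comp h

theorem tendsto_zero_of_nonneg_of_le_beyond {α ι : Type*} [Preorder α] {l : Filter ι}
    [l.NeBot] {g : α → ℝ} {s : ι → α} {u : ι → ℝ} (hg : ∀ᶠ t in atTop, 0 ≤ g t)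
    (hu : Tendsto u l (𝓝 0)) (hbound : ∀ᶠ j in l, ∀ t, s j ≤ t → g t ≤ u j) :
    Tendsto g atTop (𝓝 0) := by
  refine tendsto_order.2 ⟨fun a ha => hg.mono fun t ht => ha.trans_le ht, fun a ha => ?_⟩
  obtain ⟨j, hj, hbj⟩ := ((hu.eventually (gt_mem_nhds ha)).and hbound).exists
  filter_upwards [eventually_ge_atTop (s j)] with t ht using (hbj t ht).trans_lt hj

theorem arctan_le_arctan_add_mul_integral_Ioi {F : ℝ → ℝ} {C : ℝ} (hC : 0 < C)
    (hreg : ContDiffOn ℝ 1 F (Ici 0)) (hnonneg : ∀ t ∈ Ici (0 : ℝ), 0 ≤ F t)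
    (hint : IntegrableOn F (Ici 0))
    (hderiv : ∀ t ∈ Ici (0 : ℝ), (1 + F t ^ 2)⁻¹ * derivWithin F (Ici 0) t ≤ C * F t)
    {s t : ℝ} (hs : 0 ≤ s) (hst : s ≤ t) :
    arctan (F t) ≤ arctan (F s) + C * ∫ x in Ioi s, F x := by
  have hIcc : Icc s t ⊆ Ici 0 := fun x hx => hs.trans hx.1
  have hIoi : Ioi s ⊆ Ici 0 := fun x hx => hs.trans hx.out.le
  have hIoo : ∀ x ∈ Ioo s t, Ici (0 : ℝ) ∈ 𝓝 x := fun x hx => Ici_mem_nhds (hs.trans_lt hx.1)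
  have harctan := arctan_sub_arctan_le_integral hst (hreg.continuousOn.mono hIcc)
    (fun x hx => (hreg.differentiableOn one_ne_zero x
      (hIcc (Ioo_subset_Icc_self hx))).differentiableAt (hIoo x hx))
    ((hint.mono_set hIcc).const_mul C)
    (fun x hx => by
      simpa only [derivWithin_of_mem_nhds (hIoo x hx)] using
        hderiv x (hIcc (Ioo_subset_Icc_self hx)))
  have htail := intervalIntegral_le_setIntegral_Ioi hst (hint.mono_set hIoi)
    fun x hx => hnonneg x (hIoi hx)
  rw [intervalIntegral.integral_const_mul] at harctan
  nlinarith

theorem stmt_3 (F : ℝ → ℝ) (C : ℝ) (hC : 0 < C)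
    (hreg : ContDiffOn ℝ 1 F (Ici 0))
    (hnonneg : ∀ t ∈ Ici (0 : ℝ), 0 ≤ F t)
    (hint : IntegrableOn F (Ici 0))
    (hderiv : ∀ t ∈ Ici (0 : ℝ), (1 + F t ^ 2)⁻¹ * derivWithin F (Ici 0) t ≤ C * F t)
    (tj : ℕ → ℝ) (htj : Tendsto tj atTop atTop)
    (hFtj : Tendsto (fun j => F (tj j)) atTop (nhds 0)) :
    Tendsto F atTop (nhds 0) := by
  refine tendsto_of_tendsto_arctan (a := 0) ?_
  rw [arctan_zero]
  have hu : Tendsto (fun j => arctan (F (tj j)) + C * ∫ x in Ioi (tj j), F x) atTop (𝓝 0) := by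
    simpa only [arctan_zero, mul_zero, add_zero, Function.comp_def] using
      ((continuous_arctan.tendsto 0).comp hFtj).add ((tendsto_integral_Ioi_zero htj).const_mul C)
  refine tendsto_zero_of_nonneg_of_le_beyond (s := tj) ?_ hu ?_
  · filter_upwards [eventually_ge_atTop 0] with t ht using arctan_nonneg.2 (hnonneg t ht)
  · filter_upwards [htj.eventually_ge_atTop 0] with j hj t ht using
      arctan_le_arctan_add_mul_integral_Ioi hC hreg hnonneg hint hderiv hj ht
end

section
/- Let E : H → ℝ be a continuous quadratic-type functional on a normed space and C_b ⊂ H constraint sets indexed by b > 0 of the form C_b = {φ : A(φ) + b·B(φ) = 1} where A, B : H → [0,∞) are continuous and positively 2-homogeneous (A(μφ) = μ²A(φ)). Define Y(b) = inf{E(φ) : φ ∈ C_b}, assumed finite and negative, with the property that minimizing sequences are bounded. Then b ↦ Y(b) is continuous: for b_m → b, |Y(b_m) - Y(b)| → 0. -/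
/-!
Rescaling by `μ = (A φ + c B φ)^{-1/2}` moves any `φ ≠ 0` onto the constraint set `C_c`, dividing
its energy by `A φ + c B φ`. For `φ ∈ C_{c'}` we have `B φ ≤ 1 / c'`, hence
`A φ + c B φ ≤ 1 + |c - c'| / c'`; since near-minimizers have negative energy this gives
`Y c * (1 + |c - c'| / c') ≤ Y c'`. Applied with `(c, c') = (b, b_m)` and `(b_m, b)`, these two
inequalities squeeze `Y b_m` to `Y b`.
-/

open Filter Topology Set

lemma add_mul_le_one_add_abs_sub_div {a β c c' : ℝ} (ha : 0 ≤ a) (hβ : 0 ≤ β) (hc' : 0 < c')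
    (h : a + c' * β = 1) : a + c * β ≤ 1 + |c - c'| / c' := by
  have hβle : β ≤ 1 / c' := by
    rw [le_div_iff₀ hc']
    linarith
  calc a + c * β = 1 + (c - c') * β := by linarith
    _ ≤ 1 + |c - c'| * β := by gcongr; exact le_abs_self _
    _ ≤ 1 + |c - c'| * (1 / c') := by gcongr
    _ = 1 + |c - c'| / c' := by ring

section QuadraticConstraint

variable {H : Type*} [AddCommGroup H] [Module ℝ H] {E A B : H → ℝ}

lemma map_zero_of_sq_homogeneous {f : H → ℝ}
    (hf : ∀ μ : ℝ, 0 < μ → ∀ φ, f (μ • φ) = μ ^ 2 * f φ) : f 0 = 0 := by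
  have h := hf 2 two_pos 0
  rw [smul_zero] at h
  linarith

variable (hEhom : ∀ μ : ℝ, 0 < μ → ∀ φ, E (μ • φ) = μ ^ 2 * E φ)
  (hAhom : ∀ μ : ℝ, 0 < μ → ∀ φ, A (μ • φ) = μ ^ 2 * A φ)
  (hBhom : ∀ μ : ℝ, 0 < μ → ∀ φ, B (μ • φ) = μ ^ 2 * B φ)
include hEhom hAhom hBhom

lemma le_div_of_isGLB_constraint {c Yc : ℝ}
    (hY : IsGLB {y | ∃ φ, A φ + c * B φ = 1 ∧ E φ = y} Yc) {φ : H}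
    (ht : 0 < A φ + c * B φ) : Yc ≤ E φ / (A φ + c * B φ) := by
  set t := A φ + c * B φ
  set μ := (Real.sqrt t)⁻¹
  have hμ : 0 < μ := inv_pos.2 (Real.sqrt_pos.2 ht)
  have hμ2 : μ ^ 2 = t⁻¹ := by rw [inv_pow, Real.sq_sqrt ht.le]
  refine hY.1 ⟨μ • φ, ?_, ?_⟩
  · rw [hAhom μ hμ, hBhom μ hμ, hμ2, mul_left_comm, ← mul_add, inv_mul_cancel₀ ht.ne']
  · rw [hEhom μ hμ, hμ2, inv_mul_eq_div]

lemma mul_one_add_le_of_isGLB_constraint {c c' Yc Yc' : ℝ} (hc' : 0 < c')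
    (hA0 : ∀ φ, 0 ≤ A φ) (hB0 : ∀ φ, 0 ≤ B φ)
    (hpos : ∀ φ : H, φ ≠ 0 → 0 < A φ + c * B φ)
    (hYc : IsGLB {y | ∃ φ, A φ + c * B φ = 1 ∧ E φ = y} Yc)
    (hYc' : IsGLB {y | ∃ φ, A φ + c' * B φ = 1 ∧ E φ = y} Yc') (hneg : Yc' < 0) :
    Yc * (1 + |c - c'| / c') ≤ Yc' := by
  set r := |c - c'| / c'
  have hr : 0 < 1 + r := by positivity
  suffices h : ∀ φ, A φ + c' * B φ = 1 → E φ < 0 → Yc * (1 + r) ≤ E φ by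
    refine le_of_forall_gt fun z hz => ?_
    obtain ⟨_, ⟨φ, hφ, rfl⟩, -, hφz⟩ := hYc'.exists_between (lt_min hz hneg)
    exact (h φ hφ (hφz.trans_le (min_le_right _ _))).trans_lt (hφz.trans_le (min_le_left _ _))
  intro φ hφ hEφ
  have hφ0 : φ ≠ 0 := by
    rintro rfl
    simp [map_zero_of_sq_homogeneous hAhom, map_zero_of_sq_homogeneous hBhom] at hφ
  have ht := hpos φ hφ0
  have hle : A φ + c * B φ ≤ 1 + r := add_mul_le_one_add_abs_sub_div (hA0 φ) (hB0 φ) hc' hφ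
  calc Yc * (1 + r) ≤ E φ / (A φ + c * B φ) * (1 + r) :=
        mul_le_mul_of_nonneg_right (le_div_of_isGLB_constraint hEhom hAhom hBhom hYc ht) hr.le
    _ ≤ E φ := by
        rw [div_mul_eq_mul_div, div_le_iff₀ ht]
        exact mul_le_mul_of_nonpos_left hle hEφ.le

end QuadraticConstraint

lemma continuousWithinAt_Ioi_of_mul_one_add_le {Y : ℝ → ℝ} {b : ℝ} (hb : 0 < b)
    (hY : ∀ c > 0, ∀ c' > 0, Y c * (1 + |c - c'| / c') ≤ Y c') :
    ContinuousWithinAt Y (Ioi 0) b := by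
  have hlower : ContinuousAt (fun x => Y b * (1 + |b - x| / x)) b := by
    fun_prop (disch := exact hb.ne')
  have hupper : ContinuousAt (fun x => Y b / (1 + |x - b| / b)) b := by
    fun_prop (disch := simp)
  refine tendsto_of_tendsto_of_tendsto_of_le_of_le'
    ((by simpa using hlower.tendsto : Tendsto _ (𝓝 b) (𝓝 (Y b))).mono_left nhdsWithin_le_nhds)
    ((by simpa using hupper.tendsto : Tendsto _ (𝓝 b) (𝓝 (Y b))).mono_left nhdsWithin_le_nhds)
    (eventually_nhdsWithin_of_forall fun x hx => hY b hb x hx)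
    (eventually_nhdsWithin_of_forall fun x hx => ?_)
  rw [le_div_iff₀ (by positivity)]
  exact hY x hx b hb

theorem stmt_15_general {H : Type*} [NormedAddCommGroup H] [NormedSpace ℝ H]
    (E A B : H → ℝ)
    (hA0 : ∀ φ, 0 ≤ A φ) (hB0 : ∀ φ, 0 ≤ B φ)
    (hEhom : ∀ (μ : ℝ), 0 < μ → ∀ φ, E (μ • φ) = μ ^ 2 * E φ)
    (hAhom : ∀ (μ : ℝ), 0 < μ → ∀ φ, A (μ • φ) = μ ^ 2 * A φ)
    (hBhom : ∀ (μ : ℝ), 0 < μ → ∀ φ, B (μ • φ) = μ ^ 2 * B φ)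
    (hpos : ∀ b > (0 : ℝ), ∀ φ : H, φ ≠ 0 → 0 < A φ + b * B φ)
    (Y : ℝ → ℝ)
    (hY : ∀ b > (0 : ℝ), IsGLB {y : ℝ | ∃ φ : H, A φ + b * B φ = 1 ∧ E φ = y} (Y b))
    (hYneg : ∀ b > (0 : ℝ), Y b < 0) :
    ∀ b > (0 : ℝ), ∀ bm : ℕ → ℝ, (∀ m, 0 < bm m) →
      Tendsto bm atTop (nhds b) → Tendsto (fun m => Y (bm m)) atTop (nhds (Y b)) := by
  intro b hb bm hbm hlim
  have hcompare : ∀ c > 0, ∀ c' > 0, Y c * (1 + |c - c'| / c') ≤ Y c' := fun c hc c' hc' =>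
    mul_one_add_le_of_isGLB_constraint hEhom hAhom hBhom hc' hA0 hB0 (hpos c hc) (hY c hc)
      (hY c' hc') (hYneg c' hc')
  exact (continuousWithinAt_Ioi_of_mul_one_add_le hb hcompare).tendsto.comp
    (tendsto_nhdsWithin_iff.2 ⟨hlim, Eventually.of_forall hbm⟩)

theorem stmt_15 {H : Type*} [NormedAddCommGroup H] [NormedSpace ℝ H]
    (E A B : H → ℝ)
    (hEcont : Continuous E) (hAcont : Continuous A) (hBcont : Continuous B)
    (hA0 : ∀ φ, 0 ≤ A φ) (hB0 : ∀ φ, 0 ≤ B φ)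
    (hEhom : ∀ (μ : ℝ), 0 < μ → ∀ φ, E (μ • φ) = μ ^ 2 * E φ)
    (hAhom : ∀ (μ : ℝ), 0 < μ → ∀ φ, A (μ • φ) = μ ^ 2 * A φ)
    (hBhom : ∀ (μ : ℝ), 0 < μ → ∀ φ, B (μ • φ) = μ ^ 2 * B φ)
    (hpos : ∀ b > (0 : ℝ), ∀ φ : H, φ ≠ 0 → 0 < A φ + b * B φ)
    (Y : ℝ → ℝ)
    (hY : ∀ b > (0 : ℝ), IsGLB {y : ℝ | ∃ φ : H, A φ + b * B φ = 1 ∧ E φ = y} (Y b))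
    (hYneg : ∀ b > (0 : ℝ), Y b < 0)
    (hbdd : ∀ b > (0 : ℝ), ∃ M : ℝ, ∀ φ : H,
      A φ + b * B φ = 1 → E φ ≤ Y b + 1 → ‖φ‖ ≤ M ∧ B φ ≤ M) :
    ∀ b > (0 : ℝ), ∀ bm : ℕ → ℝ, (∀ m, 0 < bm m) →
      Tendsto bm atTop (nhds b) → Tendsto (fun m => Y (bm m)) atTop (nhds (Y b)) :=
  stmt_15_general E A B hA0 hB0 hEhom hAhom hBhom hpos Y hY hYneg
end
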